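/- Let n, p be positive natural numbers, let Z = ℝ^{n×p} with the Frobenius norm, let X be a finite-dimensional real normed space, and let D : Z → X be L_D-Lipschitz for some L_D ≥ 0. Let T be a real n×n matrix with Tᵀ·T ⪯ κ·I for some κ ≥ 1. Let Y_o and P_o be random elements of Z on a common probability space with E := P_o − Y_o satisfying 𝔼‖E‖_F² < ∞. Let P_g = law(D(T·P_o), T·P_o) and P_g* = law(D(T·Y_o), T·Y_o) in X × Z, equipped with the pair metric d((x,y),(x',y')) = ‖x−x'‖ + ‖y−y'‖_F. Then W₁(P_g, P_g*) ≤ (1 + L_D)·𝔼‖T·E‖_F ≤ (1 + L_D)·√(κ·𝔼‖E‖_F²). -/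

import Mathlib

open Matrix MeasureTheory

/-- Matrices carry the product (entrywise) measurable structure. -/
instance matrixMeasurableSpace {m k : Type*} : MeasurableSpace (Matrix m k ℝ) :=
  inferInstanceAs (MeasurableSpace (m → k → ℝ))

/-- The Frobenius norm of a real matrix. -/
noncomputable def frob {n p : ℕ} (M : Matrix (Fin n) (Fin p) ℝ) : ℝ :=
  Real.sqrt (∑ i, ∑ j, (M i j) ^ 2)

/-- The 1-Wasserstein distance with respect to a cost function `d`: the infimum, over all
couplings `π` of `P` and `Q` (with integrable cost), of `∫ d(z, z') dπ(z, z')`. -/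
noncomputable def W1 {S : Type*} [MeasurableSpace S] (d : S → S → ℝ)
    (P Q : Measure S) : ℝ :=
  sInf {c : ℝ | ∃ π : Measure (S × S), IsProbabilityMeasure π ∧
    π.map Prod.fst = P ∧ π.map Prod.snd = Q ∧
    Integrable (fun z : S × S => d z.1 z.2) π ∧ c = ∫ z : S × S, d z.1 z.2 ∂π}


/-!
Couple the two laws through the common randomness: `ω ↦ ((D(T P_o), T P_o), (D(T Y_o), T Y_o))`.
Its cost is pointwise `‖D(T P_o) - D(T Y_o)‖ + ‖T E‖_F ≤ (1 + L_D) ‖T E‖_F`, which gives the first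
bound. The second is `𝔼 ξ ≤ √(𝔼 ξ²)` (nonnegativity of the variance) for `ξ = ‖T E‖_F`, combined
with `‖T M‖_F² ≤ κ ‖M‖_F²`, the column-by-column form of `Tᵀ T ⪯ κ I`.
-/

instance matrixBorelSpace {m k : Type*} [Countable m] [Countable k] :
    BorelSpace (Matrix m k ℝ) :=
  inferInstanceAs (BorelSpace (m → k → ℝ))

instance matrixSecondCountableTopology {m k : Type*} [Countable m] [Countable k] :
    SecondCountableTopology (Matrix m k ℝ) :=
  inferInstanceAs (SecondCountableTopology (m → k → ℝ))

section Frobenius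

variable {n p : ℕ}

lemma frob_nonneg (M : Matrix (Fin n) (Fin p) ℝ) : 0 ≤ frob M :=
  Real.sqrt_nonneg _

lemma sq_frob (M : Matrix (Fin n) (Fin p) ℝ) : frob M ^ 2 = ∑ i, ∑ j, M i j ^ 2 :=
  Real.sq_sqrt <| Finset.sum_nonneg fun _ _ => Finset.sum_nonneg fun _ _ => sq_nonneg _

lemma continuous_frob : Continuous (frob : Matrix (Fin n) (Fin p) ℝ → ℝ) :=
  Real.continuous_sqrt.comp <| continuous_finsetSum _ fun i _ =>
    continuous_finsetSum _ fun j _ => ((continuous_apply j).comp (continuous_apply i)).pow 2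

lemma continuous_of_norm_sub_le_mul_frob {X : Type*} [SeminormedAddCommGroup X] {L : ℝ}
    {D : Matrix (Fin n) (Fin p) ℝ → X} (hD : ∀ z₁ z₂, ‖D z₁ - D z₂‖ ≤ L * frob (z₁ - z₂)) :
    Continuous D := by
  refine continuous_iff_continuousAt.2 fun z => tendsto_iff_norm_sub_tendsto_zero.2 ?_
  have hcont : Continuous fun z' => L * frob (z' - z) :=
    continuous_const.mul (continuous_frob.comp (continuous_id.sub continuous_const))
  have hbound : Filter.Tendsto (fun z' => L * frob (z' - z)) (nhds z) (nhds 0) := by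
    simpa [frob] using hcont.tendsto z
  exact squeeze_zero (fun _ => norm_nonneg _) (fun z' => hD z' z) hbound

lemma sum_sq_mulVec_le_of_posSemidef {ι : Type*} [Fintype ι] [DecidableEq ι]
    {T : Matrix ι ι ℝ} {κ : ℝ}
    (hT : (κ • (1 : Matrix ι ι ℝ) - Tᵀ * T).PosSemidef) (v : ι → ℝ) :
    ∑ i, (T *ᵥ v) i ^ 2 ≤ κ * ∑ i, v i ^ 2 := by
  have h := hT.dotProduct_mulVec_nonneg v
  rw [star_trivial, sub_mulVec, dotProduct_sub, smul_mulVec, one_mulVec, dotProduct_smul,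
    ← mulVec_mulVec, dotProduct_mulVec, vecMul_transpose] at h
  simp only [dotProduct, smul_eq_mul, ← sq] at h
  linarith

lemma sq_frob_mul_le_of_posSemidef {T : Matrix (Fin n) (Fin n) ℝ} {κ : ℝ}
    (hT : (κ • (1 : Matrix (Fin n) (Fin n) ℝ) - Tᵀ * T).PosSemidef)
    (M : Matrix (Fin n) (Fin p) ℝ) :
    frob (T * M) ^ 2 ≤ κ * ∑ i, ∑ j, M i j ^ 2 := by
  rw [sq_frob, Finset.sum_comm, Finset.sum_comm (f := fun i j => M i j ^ 2), Finset.mul_sum]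
  exact Finset.sum_le_sum fun j _ => sum_sq_mulVec_le_of_posSemidef hT (fun k => M k j)

end Frobenius

lemma integral_le_sqrt_integral_sq {Ω : Type*} [MeasurableSpace Ω] {μ : Measure Ω}
    [IsProbabilityMeasure μ] {ξ : Ω → ℝ} (hξ : MemLp ξ 2 μ) :
    ∫ ω, ξ ω ∂μ ≤ Real.sqrt (∫ ω, ξ ω ^ 2 ∂μ) := by
  have hvar := ProbabilityTheory.variance_nonneg ξ μ
  rw [ProbabilityTheory.variance_eq_sub hξ] at hvar
  exact Real.le_sqrt_of_sq_le (sub_nonneg.1 hvar)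

lemma W1_map_le_integral_of_le {S Ω : Type*} [MeasurableSpace S] [MeasurableSpace Ω]
    {μ : Measure Ω} [IsProbabilityMeasure μ] {d : S → S → ℝ} (hd_nonneg : ∀ x y, 0 ≤ d x y)
    (hd : Measurable fun z : S × S => d z.1 z.2) {f g : Ω → S} (hf : Measurable f)
    (hg : Measurable g) {b : Ω → ℝ} (hb : Integrable b μ) (hdb : ∀ ω, d (f ω) (g ω) ≤ b ω) :
    W1 d (μ.map f) (μ.map g) ≤ ∫ ω, b ω ∂μ := by
  have hfg : Measurable fun ω => (f ω, g ω) := hf.prodMk hg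
  have hcost : Integrable (fun ω => d (f ω) (g ω)) μ :=
    hb.mono' (hd.comp hfg).aestronglyMeasurable <| Filter.Eventually.of_forall fun ω => by
      rw [Real.norm_of_nonneg (hd_nonneg _ _)]
      exact hdb ω
  calc W1 d (μ.map f) (μ.map g) ≤ ∫ z : S × S, d z.1 z.2 ∂(μ.map fun ω => (f ω, g ω)) := by
        refine csInf_le ⟨0, ?_⟩ ⟨_, Measure.isProbabilityMeasure_map hfg.aemeasurable,
          ?_, ?_, ?_, rfl⟩
        · rintro c ⟨π, -, -, -, -, rfl⟩
          exact integral_nonneg fun z => hd_nonneg _ _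
        · rw [Measure.map_map measurable_fst hfg]; rfl
        · rw [Measure.map_map measurable_snd hfg]; rfl
        · exact (integrable_map_measure hd.aestronglyMeasurable hfg.aemeasurable).2 hcost
    _ = ∫ ω, d (f ω) (g ω) ∂μ := integral_map hfg.aemeasurable hd.aestronglyMeasurable
    _ ≤ ∫ ω, b ω ∂μ := integral_mono hcost hb hdb

theorem generated_pair_perturbation_general (n p : ℕ)
    {X : Type*} [NormedAddCommGroup X] [NormedSpace ℝ X] [FiniteDimensional ℝ X]
    [MeasurableSpace X] [BorelSpace X]
    (LD : ℝ) (hLD : 0 ≤ LD) (D : Matrix (Fin n) (Fin p) ℝ → X)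
    (hD : ∀ z₁ z₂ : Matrix (Fin n) (Fin p) ℝ, ‖D z₁ - D z₂‖ ≤ LD * frob (z₁ - z₂))
    (T : Matrix (Fin n) (Fin n) ℝ) (κ : ℝ)
    (hT : (κ • (1 : Matrix (Fin n) (Fin n) ℝ) - Tᵀ * T).PosSemidef)
    {Ω : Type*} [MeasurableSpace Ω] (μ : Measure Ω) [IsProbabilityMeasure μ]
    (Yo Po : Ω → Matrix (Fin n) (Fin p) ℝ) (hYo : Measurable Yo) (hPo : Measurable Po)
    (hE2 : Integrable (fun ω => ∑ i, ∑ j, ((Po ω - Yo ω) i j) ^ 2) μ) :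
    W1 (fun z z' : X × Matrix (Fin n) (Fin p) ℝ => ‖z.1 - z'.1‖ + frob (z.2 - z'.2))
        (μ.map (fun ω => (D (T * Po ω), T * Po ω)))
        (μ.map (fun ω => (D (T * Yo ω), T * Yo ω)))
      ≤ (1 + LD) * ∫ ω, frob (T * (Po ω - Yo ω)) ∂μ ∧
    (1 + LD) * ∫ ω, frob (T * (Po ω - Yo ω)) ∂μ
      ≤ (1 + LD) * Real.sqrt (κ * ∫ ω, ∑ i, ∑ j, ((Po ω - Yo ω) i j) ^ 2 ∂μ) := by
  have : SecondCountableTopology X := secondCountable_of_proper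
  have hTE_meas : Measurable fun ω => frob (T * (Po ω - Yo ω)) :=
    (continuous_frob.comp (continuous_const.matrix_mul continuous_id)).measurable.comp
      (hPo.sub hYo)
  have hTE_sq : ∀ ω, frob (T * (Po ω - Yo ω)) ^ 2 ≤ κ * ∑ i, ∑ j, (Po ω - Yo ω) i j ^ 2 :=
    fun ω => sq_frob_mul_le_of_posSemidef hT _
  have hTE_L2 : MemLp (fun ω => frob (T * (Po ω - Yo ω))) 2 μ :=
    (memLp_two_iff_integrable_sq hTE_meas.aestronglyMeasurable).2 <|
      (hE2.const_mul κ).mono' (hTE_meas.pow_const 2).aestronglyMeasurable <|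
        Filter.Eventually.of_forall fun ω => by
          rw [Real.norm_of_nonneg (sq_nonneg _)]
          exact hTE_sq ω
  have hpair : Measurable fun M : Matrix (Fin n) (Fin p) ℝ => (D (T * M), T * M) :=
    ((continuous_of_norm_sub_le_mul_frob hD).prodMk continuous_id).measurable.comp
      (continuous_const.matrix_mul continuous_id).measurable
  refine ⟨?_, mul_le_mul_of_nonneg_left ?_ (by linarith)⟩
  · rw [← integral_const_mul]
    refine W1_map_le_integral_of_le (fun _ _ => add_nonneg (norm_nonneg _) (frob_nonneg _)) ?_
      (hpair.comp hPo) (hpair.comp hYo) ((hTE_L2.integrable one_le_two).const_mul _) fun ω => ?_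
    · exact (continuous_fst.fst.sub continuous_snd.fst).norm.add
        (continuous_frob.comp (continuous_fst.snd.sub continuous_snd.snd)) |>.measurable
    · have := hD (T * Po ω) (T * Yo ω)
      simp only [Function.comp_apply, ← Matrix.mul_sub] at this ⊢
      linarith
  · calc ∫ ω, frob (T * (Po ω - Yo ω)) ∂μ
        ≤ Real.sqrt (∫ ω, frob (T * (Po ω - Yo ω)) ^ 2 ∂μ) :=
          integral_le_sqrt_integral_sq hTE_L2
      _ ≤ Real.sqrt (κ * ∫ ω, ∑ i, ∑ j, ((Po ω - Yo ω) i j) ^ 2 ∂μ) := by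
        rw [← integral_const_mul]
        exact Real.sqrt_le_sqrt (integral_mono hTE_L2.integrable_sq (hE2.const_mul κ) hTE_sq)

/-- generated-branch pair perturbation: with `Z = ℝ^{n×p}` under the
Frobenius norm, `D : Z → X` being `L_D`-Lipschitz, `Tᵀ T ⪯ κ I` with `κ ≥ 1`, and
`E = P_o − Y_o` with `𝔼‖E‖_F² < ∞`, the 1-Wasserstein distance (under the pair metric
`‖x−x'‖ + ‖y−y'‖_F`) between the law of `(D(T·P_o), T·P_o)` and the law of
`(D(T·Y_o), T·Y_o)` is at most `(1+L_D)·𝔼‖T·E‖_F ≤ (1+L_D)·√(κ·𝔼‖E‖_F²)`. -/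
theorem generated_pair_perturbation (n p : ℕ) (hn : 0 < n) (hp : 0 < p)
    {X : Type*} [NormedAddCommGroup X] [NormedSpace ℝ X] [FiniteDimensional ℝ X]
    [MeasurableSpace X] [BorelSpace X]
    (LD : ℝ) (hLD : 0 ≤ LD) (D : Matrix (Fin n) (Fin p) ℝ → X)
    (hD : ∀ z₁ z₂ : Matrix (Fin n) (Fin p) ℝ, ‖D z₁ - D z₂‖ ≤ LD * frob (z₁ - z₂))
    (T : Matrix (Fin n) (Fin n) ℝ) (κ : ℝ) (hκ : 1 ≤ κ)
    (hT : (κ • (1 : Matrix (Fin n) (Fin n) ℝ) - Tᵀ * T).PosSemidef)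
    {Ω : Type*} [MeasurableSpace Ω] (μ : Measure Ω) [IsProbabilityMeasure μ]
    (Yo Po : Ω → Matrix (Fin n) (Fin p) ℝ) (hYo : Measurable Yo) (hPo : Measurable Po)
    (hE2 : Integrable (fun ω => ∑ i, ∑ j, ((Po ω - Yo ω) i j) ^ 2) μ) :
    W1 (fun z z' : X × Matrix (Fin n) (Fin p) ℝ => ‖z.1 - z'.1‖ + frob (z.2 - z'.2))
        (μ.map (fun ω => (D (T * Po ω), T * Po ω)))
        (μ.map (fun ω => (D (T * Yo ω), T * Yo ω)))
      ≤ (1 + LD) * ∫ ω, frob (T * (Po ω - Yo ω)) ∂μ ∧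
    (1 + LD) * ∫ ω, frob (T * (Po ω - Yo ω)) ∂μ
      ≤ (1 + LD) * Real.sqrt (κ * ∫ ω, ∑ i, ∑ j, ((Po ω - Yo ω) i j) ^ 2 ∂μ) :=
  generated_pair_perturbation_general n p LD hLD D hD T κ hT μ Yo Po hYo hPo hE2
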